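/- arXiv:1904.02965 — 2 statements merged into one kernel-verified Lean document; each statement's English description precedes it below -/
import Mathlib

section
/- If Z follows a noncentral chi-square distribution with k = n/2 degrees of freedom and noncentrality parameter λ = na²/(2σ²), then for all ρ > 0, P(Z ≥ n/2 + na²/(2σ²) + 2√((n/2 + na²/σ²)ρ) + 2ρ) ≤ e^{−ρ}. -/
set_option autoImplicit false

open MeasureTheory ProbabilityTheory Finset
open scoped ENNReal NNReal BigOperators

/-- The noncentral chi-square distribution with `k` degrees of freedom and noncentrality
parameter `lam`, realized as the law of `Σ_{i=1}^k (g_i + μ_i)²` with `g_i` i.i.d. `N(0,1)`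
and `μ_i = √(lam/k)` (so that `Σ μ_i² = lam`). -/
noncomputable def ncChiSq (k : ℕ) (lam : ℝ) : Measure ℝ :=
  Measure.map (fun g : Fin k → ℝ => ∑ i, (g i + Real.sqrt (lam / k)) ^ 2)
    (Measure.pi (fun _ : Fin k => gaussianReal 0 1))

open Real

lemma cexp_quad_eq (b c d x : ℝ) :
    Complex.exp ((b:ℂ) * (x:ℂ) ^ 2 + (c:ℂ) * (x:ℂ) + (d:ℂ))
      = ((Real.exp (b * x ^ 2 + c * x + d) : ℝ) : ℂ) := by
  rw [Complex.ofReal_exp]; norm_cast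

lemma my_integrable_rexp_quadratic {b : ℝ} (hb : b < 0) (c d : ℝ) :
    Integrable (fun x : ℝ => Real.exp (b * x ^ 2 + c * x + d)) := by
  have h := (integrable_cexp_quadratic' (b := (b:ℂ)) (by simpa using hb) c d).norm
  have : (fun x : ℝ => ‖Complex.exp ((b:ℂ) * (x:ℂ) ^ 2 + (c:ℂ) * (x:ℂ) + (d:ℂ))‖)
      = fun x : ℝ => Real.exp (b * x ^ 2 + c * x + d) := by
    funext x
    rw [cexp_quad_eq, Complex.norm_real, Real.norm_eq_abs, abs_of_pos (Real.exp_pos _)]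
  rwa [this] at h

lemma my_integral_rexp_quadratic {b : ℝ} (hb : b < 0) (c d : ℝ) :
    ∫ x : ℝ, Real.exp (b * x ^ 2 + c * x + d)
      = Real.sqrt (π / -b) * Real.exp (d - c ^ 2 / (4 * b)) := by
  have h := integral_cexp_quadratic (b := (b:ℂ)) (by simpa using hb) c d
  simp_rw [cexp_quad_eq] at h
  have hio : (∫ x : ℝ, ((Real.exp (b * x ^ 2 + c * x + d) : ℝ) : ℂ))
      = ((∫ x : ℝ, Real.exp (b * x ^ 2 + c * x + d) : ℝ) : ℂ) := integral_ofReal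
  rw [hio] at h
  apply Complex.ofReal_injective
  rw [h]
  have hb' : (0:ℝ) < π / -b := div_pos Real.pi_pos (neg_pos.mpr hb)
  have h1 : ((π : ℂ) / -(b:ℂ)) ^ (1/2 : ℂ) = ((Real.sqrt (π / -b) : ℝ) : ℂ) := by
    rw [Real.sqrt_eq_rpow, Complex.ofReal_cpow hb'.le]
    push_cast
    ring_nf
  rw [h1, show ((d:ℂ) - (c:ℂ) ^ 2 / (4 * (b:ℂ))) = ((d - c ^ 2 / (4 * b) : ℝ) : ℂ) by
    push_cast; ring, ← Complex.ofReal_exp]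
  norm_cast

lemma gauss_integral_eq (g : ℝ → ℝ) :
    ∫ x, g x ∂(gaussianReal 0 1) = ∫ x, gaussianPDFReal 0 1 x * g x := by
  rw [gaussianReal_of_var_ne_zero 0 one_ne_zero,
    show gaussianPDF 0 1 = fun x => ((Real.toNNReal (gaussianPDFReal 0 1 x) : ℝ≥0) : ℝ≥0∞)
      from rfl,
    integral_withDensity_eq_integral_smul ((measurable_gaussianPDFReal 0 1).real_toNNReal) g]
  congr 1; funext x
  rw [NNReal.smul_def, Real.coe_toNNReal _ (gaussianPDFReal_nonneg 0 1 x)]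
  rfl

lemma gauss_integrable_iff (g : ℝ → ℝ) :
    Integrable g (gaussianReal 0 1) ↔
      Integrable (fun x => gaussianPDFReal 0 1 x * g x) volume := by
  rw [gaussianReal_of_var_ne_zero 0 one_ne_zero,
    show gaussianPDF 0 1 = fun x => ((Real.toNNReal (gaussianPDFReal 0 1 x) : ℝ≥0) : ℝ≥0∞)
      from rfl,
    integrable_withDensity_iff_integrable_smul ((measurable_gaussianPDFReal 0 1).real_toNNReal)]
  constructor <;> intro h <;> refine h.congr (Filter.Eventually.of_forall fun x => ?_) <;>
    simp only [NNReal.smul_def, Real.coe_toNNReal _ (gaussianPDFReal_nonneg 0 1 x), smul_eq_mul]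

lemma gauss_key {t : ℝ} (μ x : ℝ) :
    gaussianPDFReal 0 1 x * Real.exp (t * (x + μ) ^ 2)
      = (Real.sqrt (2 * π))⁻¹
        * Real.exp ((t - 1/2) * x ^ 2 + (2 * t * μ) * x + t * μ ^ 2) := by
  simp only [gaussianPDFReal, NNReal.coe_one, mul_one, sub_zero]
  rw [mul_assoc, ← Real.exp_add]
  congr 2
  ring

lemma gauss_sq_exp_integrable {t : ℝ} (ht : t < 1/2) (μ : ℝ) :
    Integrable (fun x => Real.exp (t * (x + μ) ^ 2)) (gaussianReal 0 1) := by
  rw [gauss_integrable_iff]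
  simp only [gauss_key]
  exact (my_integrable_rexp_quadratic (by linarith) (2 * t * μ) (t * μ ^ 2)).const_mul _

lemma gauss_sq_exp_integral {t : ℝ} (ht : t < 1/2) (μ : ℝ) :
    ∫ x, Real.exp (t * (x + μ) ^ 2) ∂(gaussianReal 0 1)
      = Real.exp (t * μ ^ 2 / (1 - 2 * t)) / Real.sqrt (1 - 2 * t) := by
  have h12 : (0:ℝ) < 1 - 2 * t := by linarith
  rw [gauss_integral_eq]
  simp only [gauss_key]
  rw [integral_const_mul, my_integral_rexp_quadratic (by linarith : t - 1/2 < 0)]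
  have hne : t - 1/2 ≠ 0 := sub_ne_zero.mpr (ne_of_lt ht)
  have hexp : t * μ ^ 2 - (2 * t * μ) ^ 2 / (4 * (t - 1/2)) = t * μ ^ 2 / (1 - 2 * t) := by
    have h8 : (-4:ℝ) + t * 8 ≠ 0 := fun h => hne (by linarith)
    have h4 : (4:ℝ) * (t - 1/2) = -2 * (1 - 2 * t) := by ring
    rw [h4, eq_div_iff h12.ne', sub_mul, div_mul_eq_mul_div, mul_comm (-2 : ℝ), ← div_div,
      mul_div_assoc, div_self h12.ne']
    ring
  have hco : π / -(t - 1/2) = 2 * π / (1 - 2 * t) := by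
    rw [div_eq_div_iff (by linarith : -(t-1/2) ≠ 0) h12.ne']
    ring
  rw [hexp, hco, Real.sqrt_div (by positivity : (0:ℝ) ≤ 2 * π)]
  have h2π : Real.sqrt (2 * π) ≠ 0 := by positivity
  rw [div_mul_eq_mul_div, ← mul_div_assoc, ← mul_assoc, inv_mul_cancel₀ h2π, one_mul]



lemma pi_gauss_integral (k : ℕ) (f : ℝ → ℝ) :
    ∫ g : Fin k → ℝ, ∏ i, f (g i) ∂(Measure.pi fun _ : Fin k => gaussianReal 0 1)
      = (∫ x, f x ∂(gaussianReal 0 1)) ^ k := by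
  letI : MeasureSpace ℝ := ⟨gaussianReal 0 1⟩
  haveI : SigmaFinite (volume : Measure ℝ) := inferInstanceAs (SigmaFinite (gaussianReal 0 1))
  have h : (Measure.pi fun _ : Fin k => gaussianReal 0 1) = (volume : Measure (Fin k → ℝ)) :=
    volume_pi.symm
  rw [h]
  simpa [h] using MeasureTheory.integral_fintype_prod_eq_pow (E := ℝ) (ι := Fin k) (μ := gaussianReal 0 1) f

lemma pi_gauss_integrable (k : ℕ) (f : ℝ → ℝ) (hf : Integrable f (gaussianReal 0 1)) :
    Integrable (fun g : Fin k → ℝ => ∏ i, f (g i))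
      (Measure.pi fun _ : Fin k => gaussianReal 0 1) := by
  letI : MeasureSpace ℝ := ⟨gaussianReal 0 1⟩
  haveI : SigmaFinite (volume : Measure ℝ) := inferInstanceAs (SigmaFinite (gaussianReal 0 1))
  have h : (Measure.pi fun _ : Fin k => gaussianReal 0 1) = (volume : Measure (Fin k → ℝ)) :=
    volume_pi.symm
  rw [h]
  exact MeasureTheory.Integrable.fintype_prod (f := fun _ : Fin k => f) fun _ => hf

lemma sum_sq_measurable (k : ℕ) (c : ℝ) :
    Measurable (fun g : Fin k → ℝ => ∑ i, (g i + c) ^ 2) :=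
  Finset.measurable_sum _ fun i _ => by fun_prop

lemma ncChiSq_exp_integrable {k : ℕ} {lam t : ℝ} (ht : t < 1/2) :
    Integrable (fun x => Real.exp (t * x)) (ncChiSq k lam) := by
  have hexp : Measurable fun x : ℝ => Real.exp (t * x) := by fun_prop
  unfold ncChiSq
  rw [integrable_map_measure hexp.aestronglyMeasurable (sum_sq_measurable k _).aemeasurable]
  have : ((fun x => Real.exp (t * x)) ∘ fun g : Fin k → ℝ => ∑ i, (g i + Real.sqrt (lam / k)) ^ 2)
      = fun g : Fin k → ℝ => ∏ i, Real.exp (t * (g i + Real.sqrt (lam / k)) ^ 2) := by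
    funext g
    rw [Function.comp_apply, mul_sum, Real.exp_sum]
  rw [this]
  exact pi_gauss_integrable _ _ (gauss_sq_exp_integrable ht _)

lemma ncChiSq_exp_integral {k : ℕ} {lam t : ℝ} (hlam : 0 ≤ lam) (ht : t < 1/2) :
    ∫ x, Real.exp (t * x) ∂(ncChiSq k lam)
      = (Real.exp (t * (lam / k) / (1 - 2 * t)) / Real.sqrt (1 - 2 * t)) ^ k := by
  have hexp : Measurable fun x : ℝ => Real.exp (t * x) := by fun_prop
  unfold ncChiSq
  rw [integral_map (sum_sq_measurable k _).aemeasurable hexp.aestronglyMeasurable]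
  simp_rw [mul_sum, Real.exp_sum]
  rw [pi_gauss_integral k (fun x => Real.exp (t * (x + Real.sqrt (lam / ↑k)) ^ 2)),
    gauss_sq_exp_integral ht,
    Real.sq_sqrt (div_nonneg hlam (Nat.cast_nonneg k))]

lemma inv_sqrt_le_exp {t : ℝ} (ht0 : 0 ≤ t) (ht : t < 1/2) :
    (Real.sqrt (1 - 2 * t))⁻¹ ≤ Real.exp ((t - t ^ 2) / (1 - 2 * t)) := by
  have h12 : (0:ℝ) < 1 - 2 * t := by linarith
  set u : ℝ := (2 * t - 2 * t ^ 2) / (1 - 2 * t) with hu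
  have hu0 : 0 ≤ u := div_nonneg (by nlinarith) h12.le
  have hsum : 1 + u + u ^ 2 / 2 ≤ Real.exp u := by
    have h := Real.sum_le_exp_of_nonneg hu0 3
    norm_num [Finset.sum_range_succ] at h
    linarith
  have hinv : (1 - 2 * t)⁻¹ ≤ 1 + u + u ^ 2 / 2 := by
    rw [← one_div, div_le_iff₀ h12]
    have e1 : u * (1 - 2 * t) = 2 * t - 2 * t ^ 2 := div_mul_cancel₀ _ h12.ne'
    have e2 : u ^ 2 * (1 - 2 * t) = u * (2 * t - 2 * t ^ 2) := by
      rw [sq, mul_assoc, e1]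
    nlinarith [e1, e2, sq_nonneg t, sq_nonneg (t^2), mul_pos h12 h12]
  calc (Real.sqrt (1 - 2 * t))⁻¹ = Real.sqrt ((1 - 2 * t)⁻¹) := (Real.sqrt_inv _).symm
    _ ≤ Real.sqrt (Real.exp u) := Real.sqrt_le_sqrt (hinv.trans hsum)
    _ = Real.exp ((t - t ^ 2) / (1 - 2 * t)) := by
        rw [show u = (t - t ^ 2) / (1 - 2 * t) + (t - t ^ 2) / (1 - 2 * t) by
          rw [hu, ← add_div]; ring_nf, Real.exp_add,
          Real.sqrt_mul_self (Real.exp_nonneg _)]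

/-- Birgé's tail bound for a noncentral chi-square variable `Z` with
`k = n/2` degrees of freedom and noncentrality `λ = n a²/(2σ²)`: for all `ρ > 0`,
`P(Z ≥ n/2 + n a²/(2σ²) + 2 √((n/2 + n a²/σ²) ρ) + 2ρ) ≤ e^{−ρ}`. -/
theorem noncentral_chisq_tail_bound
    {Ω : Type*} [MeasurableSpace Ω] (P : Measure Ω) [IsProbabilityMeasure P]
    (m : ℕ) (hm : 0 < m) (n : ℕ) (hn : n = 2 * m)
    (a σ : ℝ) (hσ : 0 < σ)
    (Z : Ω → ℝ) (hZ_meas : Measurable Z)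
    (hZ : Measure.map Z P = ncChiSq m ((n : ℝ) * a ^ 2 / (2 * σ ^ 2))) :
    ∀ ρ : ℝ, 0 < ρ →
      P {ω | (n : ℝ) / 2 + (n : ℝ) * a ^ 2 / (2 * σ ^ 2)
            + 2 * Real.sqrt (((n : ℝ) / 2 + (n : ℝ) * a ^ 2 / σ ^ 2) * ρ) + 2 * ρ
          ≤ Z ω}
        ≤ ENNReal.ofReal (Real.exp (-ρ)) := by
  intro ρ hρ
  have hσ2 : (0:ℝ) < σ ^ 2 := by positivity
  set lam : ℝ := (n:ℝ) * a ^ 2 / (2 * σ ^ 2) with hlamdef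
  have hlam : 0 ≤ lam := by positivity
  have hm' : (0:ℝ) < (m:ℝ) := by exact_mod_cast hm
  set v : ℝ := (m:ℝ) + 2 * lam with hvdef
  have hv : 0 < v := by positivity
  set s : ℝ := Real.sqrt (ρ / v) with hsdef
  have hs : 0 < s := Real.sqrt_pos.mpr (div_pos hρ hv)
  have hs2 : s ^ 2 = ρ / v := Real.sq_sqrt (div_pos hρ hv).le
  have hρv : ρ = v * s ^ 2 := by rw [hs2]; field_simp
  have h1s : (0:ℝ) < 1 + 2 * s := by linarith
  set t : ℝ := s / (1 + 2 * s) with htdef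
  have ht0 : 0 ≤ t := le_of_lt (div_pos hs h1s)
  have ht : t < 1/2 := by rw [htdef, div_lt_iff₀ h1s]; linarith
  have h12 : (0:ℝ) < 1 - 2 * t := by linarith
  set ε : ℝ := (m:ℝ) + lam + 2 * (v * s) + 2 * (v * s ^ 2) with hεdef
  have hn2 : (n:ℝ) / 2 = (m:ℝ) := by rw [hn]; push_cast; ring
  have hveq : (n:ℝ) / 2 + (n:ℝ) * a ^ 2 / σ ^ 2 = v := by
    rw [hn2, hvdef, hlamdef]
    field_simp
  have hE : (n:ℝ) / 2 + lam + 2 * Real.sqrt (((n:ℝ) / 2 + (n:ℝ) * a ^ 2 / σ ^ 2) * ρ)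
      + 2 * ρ = ε := by
    rw [hveq, hn2, hεdef]
    have : v * ρ = (v * s) ^ 2 := by rw [hρv]; ring
    rw [this, Real.sqrt_sq (by positivity), hρv]
  have hexp : Measurable fun x : ℝ => Real.exp (t * x) := by fun_prop
  have hint : Integrable (fun ω => Real.exp (t * Z ω)) P := by
    have h1 : Integrable (fun x => Real.exp (t * x)) (Measure.map Z P) := by
      rw [hZ]; exact ncChiSq_exp_integrable ht
    have h2 := (integrable_map_measure hexp.aestronglyMeasurable
      hZ_meas.aemeasurable).mp h1
    exact h2
  have hch := measure_ge_le_exp_mul_mgf (X := Z) (μ := P) ε ht0 hint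
  have hmgf : mgf Z P t
      = (Real.exp (t * (lam / m) / (1 - 2 * t)) / Real.sqrt (1 - 2 * t)) ^ m := by
    rw [mgf, ← integral_map hZ_meas.aemeasurable hexp.aestronglyMeasurable, hZ,
      ncChiSq_exp_integral hlam ht]
  have hMle : mgf Z P t
      ≤ Real.exp (lam * t / (1 - 2 * t) + (m:ℝ) * ((t - t ^ 2) / (1 - 2 * t))) := by
    rw [hmgf, div_eq_mul_inv, mul_pow]
    calc Real.exp (t * (lam / m) / (1 - 2 * t)) ^ m * ((Real.sqrt (1 - 2 * t))⁻¹) ^ m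
        ≤ Real.exp (t * (lam / m) / (1 - 2 * t)) ^ m
          * Real.exp ((t - t ^ 2) / (1 - 2 * t)) ^ m := by
          gcongr
          exact inv_sqrt_le_exp ht0 ht
      _ = Real.exp ((m:ℝ) * (t * (lam / m) / (1 - 2 * t))
            + (m:ℝ) * ((t - t ^ 2) / (1 - 2 * t))) := by
          rw [Real.exp_add, Real.exp_nat_mul, Real.exp_nat_mul]
      _ = Real.exp (lam * t / (1 - 2 * t) + (m:ℝ) * ((t - t ^ 2) / (1 - 2 * t))) := by
          congr 2
          field_simp
  have hkey : -t * ε + (lam * t / (1 - 2 * t) + (m:ℝ) * ((t - t ^ 2) / (1 - 2 * t))) = -ρ := by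
    rw [hεdef, hρv, hvdef, htdef]
    have h2s : (1:ℝ) + 2 * s ≠ 0 := h1s.ne'
    have h2t : (1:ℝ) - 2 * (s / (1 + 2 * s)) ≠ 0 := by
      rw [← htdef]; exact h12.ne'
    field_simp
    ring
  have hfinal : (P {ω | ε ≤ Z ω}).toReal ≤ Real.exp (-ρ) := by
    calc (P {ω | ε ≤ Z ω}).toReal ≤ Real.exp (-t * ε) * mgf Z P t := hch
      _ ≤ Real.exp (-t * ε)
          * Real.exp (lam * t / (1 - 2 * t) + (m:ℝ) * ((t - t ^ 2) / (1 - 2 * t))) := by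
          gcongr
      _ = Real.exp (-t * ε
          + (lam * t / (1 - 2 * t) + (m:ℝ) * ((t - t ^ 2) / (1 - 2 * t)))) :=
          (Real.exp_add _ _).symm
      _ = Real.exp (-ρ) := by rw [hkey]
  rw [hE]
  calc P {ω | ε ≤ Z ω} = ENNReal.ofReal ((P {ω | ε ≤ Z ω}).toReal) :=
        (ENNReal.ofReal_toReal (measure_ne_top _ _)).symm
    _ ≤ ENNReal.ofReal (Real.exp (-ρ)) := ENNReal.ofReal_le_ofReal hfinal
end

section
/- Let χ be a chi-square random variable with n/2 degrees of freedom. Then for all x > 0, P((2σ²/n)χ ≤ σ² − (4σ²/√(2n))√x) ≤ e^{−x}. -/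
set_option autoImplicit false

open MeasureTheory ProbabilityTheory Finset
open scoped ENNReal NNReal BigOperators

section Aux
open Real

lemma aux_log {u : ℝ} (h0 : 0 ≤ u) (h1 : u < 1) :
    Real.log (1 - u) ≤ -u - u ^ 2 / 2 := by
  have habs : |u| < 1 := by rw [abs_of_nonneg h0]; exact h1
  have hs := Real.hasSum_pow_div_log_of_abs_lt_one habs
  have h2 : ∑ n ∈ ({0, 1} : Finset ℕ), u ^ (n + 1) / (n + 1) ≤ -Real.log (1 - u) := by
    refine sum_le_hasSum _ (fun i _ => by positivity) hs
  simp [Finset.sum_insert, Finset.mem_singleton] at h2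
  nlinarith [h2]

lemma gauss_sq_mgf {t : ℝ} (ht : t ≤ 0) :
    ∫ y, Real.exp (t * y ^ 2) ∂(gaussianReal 0 1) = (Real.sqrt (1 - 2 * t))⁻¹ := by
  have hb : (0:ℝ) < 1/2 - t := by linarith
  rw [gaussianReal_of_var_ne_zero _ one_ne_zero]
  have hpdf : gaussianPDF 0 1 = fun y => ((gaussianPDFReal 0 1 y).toNNReal : ℝ≥0∞) := rfl
  rw [hpdf, integral_withDensity_eq_integral_smul
    ((measurable_gaussianPDFReal 0 1).real_toNNReal) _]
  have heq : ∀ y : ℝ, (gaussianPDFReal 0 1 y).toNNReal • Real.exp (t * y ^ 2)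
      = (Real.sqrt (2 * π))⁻¹ * Real.exp (-(1/2 - t) * y ^ 2) := by
    intro y
    rw [NNReal.smul_def, smul_eq_mul, Real.coe_toNNReal _ (gaussianPDFReal_nonneg 0 1 y)]
    simp only [gaussianPDFReal, NNReal.coe_one, mul_one, sub_zero]
    rw [mul_assoc, ← Real.exp_add]
    congr 1
    ring_nf
  calc ∫ y, (gaussianPDFReal 0 1 y).toNNReal • Real.exp (t * y ^ 2)
      = ∫ y : ℝ, (Real.sqrt (2 * π))⁻¹ * Real.exp (-(1/2 - t) * y ^ 2) := by
        exact integral_congr_ae (Filter.Eventually.of_forall heq)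
    _ = (Real.sqrt (2 * π))⁻¹ * ∫ y : ℝ, Real.exp (-(1/2 - t) * y ^ 2) := integral_const_mul _ _
    _ = (Real.sqrt (2 * π))⁻¹ * Real.sqrt (π / (1/2 - t)) := by rw [integral_gaussian]
    _ = (Real.sqrt (1 - 2 * t))⁻¹ := by
        rw [← Real.sqrt_inv, ← Real.sqrt_mul (by positivity), ← Real.sqrt_inv]
        congr 1
        have hπ := Real.pi_pos
        have h1 : (1:ℝ)/2 - t ≠ 0 := ne_of_gt hb
        have h2 : (1:ℝ) - 2*t ≠ 0 := by intro h; apply h1; linarith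
        field_simp

lemma pi_integral_pow (m : ℕ) (f : ℝ → ℝ) :
    ∫ g : Fin m → ℝ, ∏ i, f (g i) ∂(Measure.pi fun _ : Fin m => gaussianReal 0 1)
      = (∫ y, f y ∂(gaussianReal 0 1)) ^ m := by
  letI : MeasureSpace ℝ := ⟨gaussianReal 0 1⟩
  haveI : SigmaFinite (volume : Measure ℝ) := inferInstanceAs (SigmaFinite (gaussianReal 0 1))
  have := MeasureTheory.integral_fintype_prod_eq_pow (ι := Fin m) f (μ := gaussianReal 0 1)
  simpa [MeasureTheory.volume_pi] using this
end Aux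

/-- Lower deviation bound for a chi-square variable `χ` with `n/2`
degrees of freedom: for all `x > 0`,
`P((2σ²/n) χ ≤ σ² − (4σ²/√(2n)) √x) ≤ e^{−x}`. -/
theorem chisq_lower_deviation
    {Ω : Type*} [MeasurableSpace Ω] (P : Measure Ω) [IsProbabilityMeasure P]
    (m : ℕ) (hm : 0 < m) (n : ℕ) (hn : n = 2 * m)
    (σ : ℝ) (hσ : 0 < σ)
    (χ : Ω → ℝ) (hχ_meas : Measurable χ)
    (hχ : Measure.map χ P
      = Measure.map (fun g : Fin m → ℝ => ∑ i, (g i) ^ 2)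
          (Measure.pi (fun _ : Fin m => gaussianReal 0 1))) :
    ∀ x : ℝ, 0 < x →
      P {ω | (2 * σ ^ 2 / (n : ℝ)) * χ ω
          ≤ σ ^ 2 - (4 * σ ^ 2 / Real.sqrt (2 * (n : ℝ))) * Real.sqrt x}
        ≤ ENNReal.ofReal (Real.exp (-x)) := by
  intro x hx
  have hm' : (0:ℝ) < m := Nat.cast_pos.mpr hm
  set s : ℝ := Real.sqrt ((m:ℝ) * x) with hs_def
  have hs_pos : 0 < s := Real.sqrt_pos.mpr (by positivity)
  have hs_sq : s ^ 2 = (m:ℝ) * x := Real.sq_sqrt (by positivity)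
  set a : ℝ := (m:ℝ) - 2 * s with ha_def
  have hsum_meas : Measurable (fun g : Fin m → ℝ => ∑ i, g i ^ 2) :=
    Finset.measurable_sum _ (fun i _ => (measurable_pi_apply i).pow_const 2)
  -- rewrite the event
  have hset : {ω | (2 * σ ^ 2 / (n : ℝ)) * χ ω
        ≤ σ ^ 2 - (4 * σ ^ 2 / Real.sqrt (2 * (n : ℝ))) * Real.sqrt x}
      = {ω | χ ω ≤ a} := by
    have hn' : (n:ℝ) = 2 * m := by rw [hn]; push_cast; ring
    have hc : (0:ℝ) < σ ^ 2 / m := by positivity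
    have hsm : Real.sqrt (m:ℝ) ^ 2 = (m:ℝ) := Real.sq_sqrt hm'.le
    have hsm0 : Real.sqrt (m:ℝ) ≠ 0 := by positivity
    have h1 : 2 * σ ^ 2 / (n:ℝ) = σ ^ 2 / m := by
      rw [hn']; field_simp
    have hsqm : Real.sqrt (2 * (n:ℝ)) = 2 * Real.sqrt m := by
      rw [hn', show (2:ℝ) * (2 * m) = 2 ^ 2 * m by ring,
        Real.sqrt_mul (by positivity), Real.sqrt_sq (by norm_num)]
    have h2 : (4 * σ ^ 2 / Real.sqrt (2 * (n:ℝ))) * Real.sqrt x = (σ ^ 2 / m) * (2 * s) := by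
      rw [hsqm, hs_def, Real.sqrt_mul hm'.le x]
      field_simp
      linear_combination (-4) * hsm
    have h3 : σ ^ 2 - (σ ^ 2 / m) * (2 * s) = (σ ^ 2 / m) * a := by
      rw [ha_def]; field_simp
    ext ω
    simp only [Set.mem_setOf_eq]
    rw [h1, h2, h3, mul_le_mul_iff_right₀ hc]
  rw [hset]
  by_cases ha : a ≤ 0
  · -- the event is contained in a hyperplane, hence null
    have e1 : P {ω | χ ω ≤ a} = Measure.map χ P (Set.Iic a) := by
      rw [Measure.map_apply hχ_meas measurableSet_Iic]; rfl
    rw [e1, hχ, Measure.map_apply hsum_meas measurableSet_Iic]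
    have hsub : (fun g : Fin m → ℝ => ∑ i, g i ^ 2) ⁻¹' Set.Iic a
        ⊆ {g : Fin m → ℝ | g ⟨0, hm⟩ = 0} := by
      intro g hg
      simp only [Set.mem_preimage, Set.mem_Iic] at hg
      have h1 : g ⟨0, hm⟩ ^ 2 ≤ ∑ i, g i ^ 2 :=
        Finset.single_le_sum (f := fun i => g i ^ 2) (fun i _ => sq_nonneg _) (Finset.mem_univ _)
      have h2 : g ⟨0, hm⟩ ^ 2 = 0 := le_antisymm (by linarith) (sq_nonneg _)
      exact sq_eq_zero_iff.mp h2
    haveI : NullSingletonClass (gaussianReal 0 1 : Measure ℝ) :=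
      ⟨fun y => (gaussianReal_absolutelyContinuous 0 one_ne_zero) (measure_singleton y)⟩
    have h0 := MeasureTheory.Measure.pi_hyperplane (fun _ : Fin m => gaussianReal 0 1)
      ⟨0, hm⟩ (0:ℝ)
    rw [measure_mono_null hsub h0]
    exact zero_le
  push_neg at ha
  set t : ℝ := (a - m) / (2 * a) with ht_def
  have ht : t ≤ 0 := div_nonpos_iff.mpr (Or.inr ⟨by rw [ha_def]; linarith, by linarith⟩)
  have hae : ∀ᵐ ω ∂P, 0 ≤ χ ω := by
    have hnull : P {ω | χ ω < 0} = 0 := by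
      have e1 : P {ω | χ ω < 0} = Measure.map χ P (Set.Iio 0) := by
        rw [Measure.map_apply hχ_meas measurableSet_Iio]; rfl
      rw [e1, hχ, Measure.map_apply hsum_meas measurableSet_Iio]
      have : (fun g : Fin m → ℝ => ∑ i, g i ^ 2) ⁻¹' Set.Iio 0 = ∅ := by
        ext g
        simp only [Set.mem_preimage, Set.mem_Iio, Set.mem_empty_iff_false, iff_false, not_lt]
        positivity
      rw [this, measure_empty]
    rw [ae_iff]
    convert hnull using 2
    ext ω
    simp [not_le]
  have hint : Integrable (fun ω => Real.exp (t * χ ω)) P := by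
    refine Integrable.mono' (integrable_const 1)
      ((hχ_meas.const_mul t).exp.aestronglyMeasurable) ?_
    filter_upwards [hae] with ω hω
    rw [Real.norm_eq_abs, abs_of_pos (Real.exp_pos _)]
    exact Real.exp_le_one_iff.mpr (mul_nonpos_of_nonpos_of_nonneg ht hω)
  have hmgf : mgf χ P t = ((Real.sqrt (1 - 2 * t))⁻¹) ^ m := by
    have hmeas_e : Measurable fun y : ℝ => Real.exp (t * y) :=
      (measurable_id.const_mul t).exp
    have hmeas_e2 : Measurable fun g : Fin m → ℝ => Real.exp (t * ∑ i, g i ^ 2) :=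
      (hsum_meas.const_mul t).exp
    calc mgf χ P t = ∫ ω, Real.exp (t * χ ω) ∂P := rfl
      _ = ∫ y, Real.exp (t * y) ∂(Measure.map χ P) :=
          (integral_map hχ_meas.aemeasurable hmeas_e.aestronglyMeasurable).symm
      _ = ∫ g : Fin m → ℝ, Real.exp (t * ∑ i, g i ^ 2)
            ∂(Measure.pi fun _ : Fin m => gaussianReal 0 1) := by
          rw [hχ, integral_map hsum_meas.aemeasurable hmeas_e.aestronglyMeasurable]
      _ = ∫ g : Fin m → ℝ, ∏ i, Real.exp (t * g i ^ 2)
            ∂(Measure.pi fun _ : Fin m => gaussianReal 0 1) := by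
          congr 1; ext g; rw [Finset.mul_sum, Real.exp_sum]
      _ = (∫ y, Real.exp (t * y ^ 2) ∂(gaussianReal 0 1)) ^ m :=
          pi_integral_pow m (fun y => Real.exp (t * y ^ 2))
      _ = ((Real.sqrt (1 - 2 * t))⁻¹) ^ m := by rw [gauss_sq_mgf ht]
  have hchern := measure_le_le_exp_mul_mgf (X := χ) (μ := P) a ht hint
  rw [hmgf] at hchern
  have hfinal : Real.exp (-t * a) * ((Real.sqrt (1 - 2 * t))⁻¹) ^ m ≤ Real.exp (-x) := by
    set u : ℝ := 2 * s / m with hu_def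
    have hu0 : 0 < u := by positivity
    have hu1 : u < 1 := by rw [hu_def, div_lt_one hm']; simp [ha_def] at ha; linarith
    have hum : (m:ℝ) * u = 2 * s := by rw [hu_def]; field_simp
    have hmu2 : (m:ℝ) * u ^ 2 = 4 * x := by
      rw [hu_def]; field_simp; nlinarith [hs_sq]
    have h1m : 1 - 2 * t = (m:ℝ) / a := by rw [ht_def]; field_simp; ring
    have haM : a / m = 1 - u := by rw [hu_def, ha_def]; field_simp
    have hsqrt : (Real.sqrt (1 - 2 * t))⁻¹ = Real.exp (Real.log (a / m) / 2) := by
      rw [h1m, ← Real.sqrt_inv, inv_div, ← Real.log_sqrt (by positivity),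
        Real.exp_log (Real.sqrt_pos.mpr (by positivity))]
    rw [hsqrt, ← Real.exp_nat_mul, ← Real.exp_add, Real.exp_le_exp]
    have hta : -t * a = s := by
      rw [ht_def, neg_mul, div_mul_eq_mul_div, mul_div_mul_right _ _ ha.ne', ha_def]; ring
    have hlog : Real.log (a / m) ≤ -u - u ^ 2 / 2 := by
      rw [haM]; exact aux_log hu0.le hu1
    have hlogm : (m:ℝ) * (Real.log (a / m) / 2) ≤ (m:ℝ) * ((-u - u ^ 2 / 2) / 2) := by
      apply mul_le_mul_of_nonneg_left _ hm'.le
      linarith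
    rw [hta]
    nlinarith [hlogm, hum, hmu2]
  calc P {ω | χ ω ≤ a} = ENNReal.ofReal ((P {ω | χ ω ≤ a}).toReal) :=
        (ENNReal.ofReal_toReal (measure_ne_top P _)).symm
    _ ≤ ENNReal.ofReal (Real.exp (-x)) :=
        ENNReal.ofReal_le_ofReal (hchern.trans hfinal)
end
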